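/- Let σ : A → A⁺ be a tame substitution. Then there is a constant C such that for all n ≥ 1 and all a ∈ A_l, every factor of σⁿ(a) that consists only of letters from A_s and occurs strictly between two occurrences of letters of A_l has length at most C (i.e., sup_n gap(n) < ∞). -/

import Mathlib

namespace SubstMin

variable {A : Type*}

/-- Apply a map `σ : A → A⁺` to a word by concatenation. -/
def substW (σ : A → List A) (w : List A) : List A := w.flatMap σ

/-- `n`-th iterate of the substitution applied to a word. -/
def substIter (σ : A → List A) (n : ℕ) (w : List A) : List A := (substW σ)^[n] w

/-- The set `A_l` of letters `a` with `|σⁿ(a)| → ∞`. -/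
def longLetters (σ : A → List A) : Set A :=
  {a | Filter.Tendsto (fun n => (substIter σ n [a]).length) Filter.atTop Filter.atTop}

/-- The set `A_s = A \ A_l`. -/
def shortLetters (σ : A → List A) : Set A := (longLetters σ)ᶜ

/-- `σ` is a substitution: letters map to nonempty words and `A_l ≠ ∅`. -/
def IsSubstitution (σ : A → List A) : Prop :=
  (∀ a, σ a ≠ []) ∧ (longLetters σ).Nonempty

/-- The language `L(σ)`: factors of some `σⁿ(a)`, `n ≥ 1`. -/
def lang (σ : A → List A) : Set (List A) :=
  {w | ∃ (a : A) (n : ℕ), 1 ≤ n ∧ w <:+: substIter σ n [a]}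

/-- The finite factor `x[s,t]` of a bi-infinite sequence. -/
def factorOf (x : ℤ → A) (s t : ℤ) : List A :=
  (List.range (t - s + 1).toNat).map fun i => x (s + (i : ℤ))

/-- The substitution dynamical system `X_σ`. -/
def XSub (σ : A → List A) : Set (ℤ → A) :=
  {x | ∀ s t : ℤ, s ≤ t → factorOf x s t ∈ lang σ}

/-- The left shift `T`. -/
def shiftT (x : ℤ → A) : ℤ → A := fun i => x (i + 1)

/-- A subshift is minimal if it is nonempty and has no nonempty proper closed
shift-invariant subset. -/
def IsMinimalSubshift [TopologicalSpace A] (X : Set (ℤ → A)) : Prop :=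
  X.Nonempty ∧ ∀ Y : Set (ℤ → A), Y ⊆ X → Y.Nonempty → IsClosed Y →
    shiftT '' Y = Y → Y = X

/-- `a ∈ A_l` is left isolated: `σⁿ(a) = u a w` with `u ∈ A_s⁺`, `w ∈ A*`. -/
def LeftIsolated (σ : A → List A) (a : A) : Prop :=
  ∃ n : ℕ, 1 ≤ n ∧ ∃ u w : List A, u ≠ [] ∧ (∀ b ∈ u, b ∈ shortLetters σ) ∧
    substIter σ n [a] = u ++ a :: w

/-- `a ∈ A_l` is right isolated: `σᵐ(a) = w a u` with `u ∈ A_s⁺`, `w ∈ A*`. -/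
def RightIsolated (σ : A → List A) (a : A) : Prop :=
  ∃ n : ℕ, 1 ≤ n ∧ ∃ u w : List A, u ≠ [] ∧ (∀ b ∈ u, b ∈ shortLetters σ) ∧
    substIter σ n [a] = w ++ a :: u

/-- `σ` is tame: no letter of `A_l` is left or right isolated. -/
def Tame (σ : A → List A) : Prop :=
  ∀ a ∈ longLetters σ, ¬ LeftIsolated σ a ∧ ¬ RightIsolated σ a

/-- `σ` is `l`-primitive. -/
def LPrimitive (σ : A → List A) : Prop :=
  ∃ n : ℕ, 1 ≤ n ∧ ∀ a ∈ longLetters σ, ∀ b ∈ longLetters σ, a ∈ substIter σ n [b]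

/-- `a → b` : `b` occurs in `σⁿ(a)` for some `n ≥ 1`. -/
def arrow (σ : A → List A) (a b : A) : Prop :=
  ∃ n : ℕ, 1 ≤ n ∧ b ∈ substIter σ n [a]

/-- `A_{∘,l} = {a ∈ A_l | a → a}`. -/
def circLong (σ : A → List A) : Set A := {a | a ∈ longLetters σ ∧ arrow σ a a}

/-- `A_{min,l}`: letters of `A_l` minimal in `A_l`. -/
def minLong (σ : A → List A) : Set A :=
  {a | a ∈ longLetters σ ∧ ∀ b ∈ longLetters σ, arrow σ a b → arrow σ b a}

/-- `x` is a periodic point of the shift. -/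
def IsPeriodicPoint (x : ℤ → A) : Prop := ∃ p : ℕ, 1 ≤ p ∧ shiftT^[p] x = x

/-- `X` is a single periodic orbit. -/
def IsSinglePeriodicOrbit (X : Set (ℤ → A)) : Prop :=
  ∃ x : ℤ → A, IsPeriodicPoint x ∧ X = Set.range fun i : ℤ => fun j => x (j + i)

/-- `y = σ(x)` : `y` is obtained from `x` by applying `σ` to each coordinate and
concatenating, with `σ(x(0))` placed starting at coordinate `0`. -/
def IsSubstImage (σ : A → List A) (x y : ℤ → A) : Prop :=
  ∃ o : ℤ → ℤ, o 0 = 0 ∧ (∀ i : ℤ, o (i + 1) = o i + (σ (x i)).length) ∧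
    ∀ i : ℤ, factorOf y (o i) (o (i + 1) - 1) = σ (x i)

/-- The map `s` on nonempty subsets of `A_l`: `s(F) = ⋃_{a ∈ F} (Lett(σ(a)) ∩ A_l)`. -/
def sMap (σ : A → List A) (F : Set A) : Set A :=
  {b | b ∈ longLetters σ ∧ ∃ a ∈ F, b ∈ σ a}

end SubstMin

/-!
Write `f a` for the first letter of `A_l` in `σ(a)` and `p a` for the word of `A_s`-letters
before it. Images of short letters are uniformly bounded, `|σⁿ(d)| ≤ K`, and for `a ∈ A_l` the
`A_s`-prefix of `σⁿ(a)` is the concatenation of the words `σⁿ⁻¹⁻ⁱ(p(fⁱ a))`, `i < n`.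
If `fⁱ a = fʲ a` with `i < j` and `p(fⁱ a) ≠ []`, then `σʲ⁻ⁱ(fⁱ a)` starts with a nonempty
`A_s`-word followed by `fⁱ a`, so `fⁱ a` is left isolated. For a tame substitution the letters
`fⁱ a` contributing to the prefix are therefore distinct, which bounds every `A_s`-prefix by
`K ∑_d |p d|`; reversing all images bounds the `A_s`-suffixes in the same way.
Now split `σⁿ⁺¹(a) = σⁿ(σ(a))`: an internal gap either lies inside a single `σⁿ(d)` (induction
on `n`), or it is an `A_s`-suffix of some `σⁿ(d)`, then `σⁿ` of the letters of `σ(a)` between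
`d` and `d'` (all in `A_s`, since `σⁿ` of a letter of `A_l` contains one), then an `A_s`-prefix
of `σⁿ(d')`: its length is bounded independently of `n`.
-/

theorem List.eq_of_append_cons_eq_append_cons {α : Type*} {p : α → Prop}
    {u₁ u₂ v₁ v₂ : List α} {b₁ b₂ : α} (h : u₁ ++ b₁ :: v₁ = u₂ ++ b₂ :: v₂)
    (hu₁ : ∀ x ∈ u₁, p x) (hu₂ : ∀ x ∈ u₂, p x) (hb₁ : ¬ p b₁) (hb₂ : ¬ p b₂) : u₁ = u₂ := by
  classical
  have takeWhile_eq : ∀ u b v, (∀ x ∈ u, p x) → ¬ p b → (u ++ b :: v).takeWhile (p ·) = u :=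
    fun u b v hu hb => by rw [List.takeWhile_append_of_pos (by simpa using hu)]; simp [hb]
  rw [← takeWhile_eq u₁ b₁ v₁ hu₁ hb₁, h, takeWhile_eq u₂ b₂ v₂ hu₂ hb₂]

theorem List.flatMap_eq_append_cons {α β : Type*} {g : α → List β} {b : β} {v : List β} :
    ∀ {l : List α} {u : List β}, l.flatMap g = u ++ b :: v →
      ∃ l₁ d l₂ u₁ u₂, l = l₁ ++ d :: l₂ ∧ g d = u₁ ++ b :: u₂ ∧
        u = l₁.flatMap g ++ u₁ ∧ v = u₂ ++ l₂.flatMap g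
  | [], _, h => by simp at h
  | x :: l, u, h => by
    rw [List.flatMap_cons] at h
    rcases List.append_eq_append_iff.mp h with ⟨u', rfl, hl⟩ | ⟨_ | ⟨b', t⟩, hx, hl⟩
    · obtain ⟨l₁, d, l₂, u₁, u₂, rfl, hd, rfl, rfl⟩ := flatMap_eq_append_cons hl
      exact ⟨x :: l₁, d, l₂, u₁, u₂, rfl, hd, by simp, rfl⟩
    · obtain ⟨l₁, d, l₂, u₁, u₂, rfl, hd, hu₁, rfl⟩ :=
        flatMap_eq_append_cons (u := []) (by simpa using hl.symm)
      exact ⟨x :: l₁, d, l₂, u₁, u₂, rfl, hd, by simp [hx, ← hu₁], rfl⟩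
    · obtain ⟨rfl, rfl⟩ := List.cons_eq_cons.mp hl
      exact ⟨[], x, l, u, t, rfl, hx, by simp, rfl⟩

theorem Finset.sum_range_iterate_le_sum_univ {α M : Type*} [Fintype α] [AddCommMonoid M]
    [PartialOrder M] [CanonicallyOrderedAdd M] (f : α → α) (g : α → M) (a : α) (n : ℕ)
    (h : ∀ i j, i < j → f^[i] a = f^[j] a → g (f^[i] a) = 0) :
    ∑ i ∈ Finset.range n, g (f^[i] a) ≤ ∑ x, g x := by
  classical
  have inj :
      Set.InjOn (fun i => f^[i] a) ({i ∈ Finset.range n | g (f^[i] a) ≠ 0} : Finset ℕ) := by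
    intro i hi j hj hij
    simp only [Finset.coe_filter, Finset.mem_range] at hi hj
    rcases lt_trichotomy i j with hlt | rfl | hgt
    · exact absurd (h i j hlt hij) hi.2
    · rfl
    · exact absurd (h j i hgt hij.symm) hj.2
  calc ∑ i ∈ Finset.range n, g (f^[i] a)
      = ∑ i ∈ Finset.range n with g (f^[i] a) ≠ 0, g (f^[i] a) :=
        (Finset.sum_filter_ne_zero _).symm
    _ = ∑ x ∈ Finset.image (fun i => f^[i] a) {i ∈ Finset.range n | g (f^[i] a) ≠ 0}, g x :=
        (Finset.sum_image inj).symm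
    _ ≤ ∑ x, g x := Finset.sum_le_sum_of_subset (Finset.subset_univ _)

namespace SubstMin

open List Filter

variable {A : Type*} (σ : A → List A)

theorem substIter_succ (n : ℕ) (w : List A) :
    substIter σ (n + 1) w = substIter σ n (w.flatMap σ) :=
  Function.iterate_succ_apply _ _ _

theorem substIter_succ' (n : ℕ) (w : List A) :
    substIter σ (n + 1) w = (substIter σ n w).flatMap σ :=
  Function.iterate_succ_apply' _ _ _

theorem substIter_add (m n : ℕ) (w : List A) :
    substIter σ (m + n) w = substIter σ m (substIter σ n w) :=
  Function.iterate_add_apply _ _ _ _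

theorem substIter_succ_singleton (n : ℕ) (a : A) :
    substIter σ (n + 1) [a] = substIter σ n (σ a) := by
  simp [substIter_succ]

theorem substIter_eq_flatMap (n : ℕ) (w : List A) :
    substIter σ n w = w.flatMap fun d => substIter σ n [d] := by
  induction n generalizing w with
  | zero => simp [substIter]
  | succ n ih =>
    rw [substIter_succ, ih, flatMap_assoc]
    congr 1
    funext d
    rw [substIter_succ_singleton, ih]

theorem substIter_append (n : ℕ) (u v : List A) :
    substIter σ n (u ++ v) = substIter σ n u ++ substIter σ n v := by
  rw [substIter_eq_flatMap, substIter_eq_flatMap σ n u, substIter_eq_flatMap σ n v, flatMap_append]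

theorem length_le_length_flatMap (hne : ∀ a, σ a ≠ []) (w : List A) :
    w.length ≤ (w.flatMap σ).length := by
  induction w with
  | nil => simp
  | cons a w ih =>
    have := length_pos_iff.mpr (hne a)
    simp only [flatMap_cons, length_append, length_cons]
    omega

theorem monotone_length_substIter (hne : ∀ a, σ a ≠ []) (w : List A) :
    Monotone fun n => (substIter σ n w).length :=
  monotone_nat_of_le_succ fun n => by
    simpa only [substIter_succ'] using length_le_length_flatMap σ hne _

theorem mem_longLetters_of_mem_substIter {n : ℕ} {a b : A} (hb : b ∈ substIter σ n [a])
    (hbl : b ∈ longLetters σ) : a ∈ longLetters σ := by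
  obtain ⟨s, t, hst⟩ := append_of_mem hb
  have hle : ∀ m, (substIter σ m [b]).length ≤ (substIter σ (m + n) [a]).length := fun m => by
    rw [substIter_add, hst, append_cons, substIter_append, substIter_append]
    simp only [length_append]
    omega
  exact (tendsto_add_atTop_iff_nat n).mp (tendsto_atTop_mono hle hbl)

theorem mem_shortLetters_of_mem_substIter {n : ℕ} {w : List A}
    (hw : ∀ d ∈ w, d ∈ shortLetters σ) {b : A} (hb : b ∈ substIter σ n w) :
    b ∈ shortLetters σ := by
  rw [substIter_eq_flatMap, mem_flatMap] at hb
  obtain ⟨d, hd, hbd⟩ := hb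
  exact fun hbl => hw d hd (mem_longLetters_of_mem_substIter σ hbd hbl)

theorem exists_forall_length_substIter_le [Fintype A] (hne : ∀ a, σ a ≠ []) :
    ∃ K, ∀ a ∈ shortLetters σ, ∀ n, (substIter σ n [a]).length ≤ K := by
  have bdd : ∀ a ∈ shortLetters σ, ∃ K, ∀ n, (substIter σ n [a]).length ≤ K := by
    intro a ha
    by_contra! h
    exact ha (tendsto_atTop_atTop_of_monotone (monotone_length_substIter σ hne [a])
      fun K => (h K).imp fun _ => le_of_lt)
  choose! K hK using bdd
  exact ⟨Finset.univ.sup K, fun a ha n => (hK a ha n).trans (Finset.le_sup (Finset.mem_univ a))⟩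

open Classical in
noncomputable def shortPrefix (a : A) : List A := (σ a).takeWhile (· ∈ shortLetters σ)

-- The default `a` of `headD` is a junk value, used only when `σ a` has no letter of `A_l`.
open Classical in
noncomputable def firstLong (a : A) : A := ((σ a).dropWhile (· ∈ shortLetters σ)).headD a

theorem mem_shortLetters_of_mem_shortPrefix {a d : A} (hd : d ∈ shortPrefix σ a) :
    d ∈ shortLetters σ := by
  classical
  simpa using mem_takeWhile_imp hd

section BoundedShortLetters

variable {σ} {K : ℕ}

theorem length_substIter_le_of_forall_short
    (hK : ∀ a ∈ shortLetters σ, ∀ n, (substIter σ n [a]).length ≤ K)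
    {w : List A} (hw : ∀ d ∈ w, d ∈ shortLetters σ) (n : ℕ) :
    (substIter σ n w).length ≤ K * w.length := by
  rw [substIter_eq_flatMap, length_flatMap, mul_comm]
  simpa using sum_le_card_nsmul (w.map fun d => (substIter σ n [d]).length) K
    (by simpa using fun d hd => hK d (hw d hd) n)

theorem exists_mem_longLetters_of_mem_longLetters
    (hK : ∀ a ∈ shortLetters σ, ∀ n, (substIter σ n [a]).length ≤ K)
    {a : A} (ha : a ∈ longLetters σ) : ∃ b ∈ σ a, b ∈ longLetters σ := by
  by_contra! h
  have bdd : ∀ n, (substIter σ (n + 1) [a]).length ≤ K * (σ a).length := fun n => by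
    rw [substIter_succ_singleton]
    exact length_substIter_le_of_forall_short hK h n
  obtain ⟨n, hn⟩ :=
    (((tendsto_add_atTop_iff_nat 1).mpr ha).eventually_gt_atTop (K * (σ a).length)).exists
  exact (bdd n).not_gt hn

theorem exists_eq_shortPrefix_append_firstLong
    (hK : ∀ a ∈ shortLetters σ, ∀ n, (substIter σ n [a]).length ≤ K)
    {a : A} (ha : a ∈ longLetters σ) :
    (∃ t, σ a = shortPrefix σ a ++ firstLong σ a :: t) ∧ firstLong σ a ∈ longLetters σ := by
  classical
  obtain ⟨b, hb, hbl⟩ := exists_mem_longLetters_of_mem_longLetters hK ha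
  have hne : (σ a).dropWhile (· ∈ shortLetters σ) ≠ [] := by
    rw [Ne, dropWhile_eq_nil_iff]
    exact fun h => of_decide_eq_true (h b hb) hbl
  have hhead : firstLong σ a = ((σ a).dropWhile (· ∈ shortLetters σ)).head hne := by
    rw [firstLong, headD_eq_head?, head?_eq_some_head hne, Option.getD_some]
  refine ⟨⟨((σ a).dropWhile (· ∈ shortLetters σ)).tail, ?_⟩, ?_⟩
  · rw [hhead, shortPrefix, cons_head_tail, takeWhile_append_dropWhile]
  · have := head_dropWhile_not _ hne
    rw [← hhead, decide_eq_false_iff_not] at this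
    exact Set.notMem_compl_iff.mp this

theorem iterate_firstLong_mem_longLetters
    (hK : ∀ a ∈ shortLetters σ, ∀ n, (substIter σ n [a]).length ≤ K)
    {a : A} (ha : a ∈ longLetters σ) (n : ℕ) : (firstLong σ)^[n] a ∈ longLetters σ := by
  induction n generalizing a with
  | zero => exact ha
  | succ n ih => exact ih (exists_eq_shortPrefix_append_firstLong hK ha).2

theorem exists_substIter_eq_append_iterate_firstLong (hne : ∀ a, σ a ≠ [])
    (hK : ∀ a ∈ shortLetters σ, ∀ n, (substIter σ n [a]).length ≤ K)
    {a : A} (ha : a ∈ longLetters σ) (n : ℕ) :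
    ∃ u v, substIter σ n [a] = u ++ (firstLong σ)^[n] a :: v ∧
      (∀ d ∈ u, d ∈ shortLetters σ) ∧
      (0 < n → (shortPrefix σ a).length ≤ u.length) ∧
      u.length ≤ ∑ i ∈ Finset.range n, K * (shortPrefix σ ((firstLong σ)^[i] a)).length := by
  induction n generalizing a with
  | zero => exact ⟨[], [], rfl, by simp, by simp, by simp⟩
  | succ n ih =>
    obtain ⟨⟨t, ht⟩, hfl⟩ := exists_eq_shortPrefix_append_firstLong hK ha
    obtain ⟨u, v, huv, hu, -, hlen⟩ := ih hfl
    have hp := length_substIter_le_of_forall_short hK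
      (fun _ hd => mem_shortLetters_of_mem_shortPrefix σ (a := a) hd) n
    refine ⟨substIter σ n (shortPrefix σ a) ++ u, v ++ substIter σ n t, ?_, ?_, ?_, ?_⟩
    · rw [substIter_succ_singleton, ht, append_cons, substIter_append, substIter_append, huv,
        Function.iterate_succ_apply]
      simp
    · simp only [mem_append]
      rintro d (hd | hd)
      exacts [mem_shortLetters_of_mem_substIter σ
        (fun _ => mem_shortLetters_of_mem_shortPrefix σ) hd, hu d hd]
    · have := monotone_length_substIter σ hne (shortPrefix σ a) (Nat.zero_le n)
      simp only [substIter, Function.iterate_zero, id, length_append] at this ⊢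
      omega
    · simp only [Finset.sum_range_succ', Function.iterate_succ_apply, Function.iterate_zero_apply,
        length_append]
      omega

theorem shortPrefix_eq_nil_of_iterate_firstLong_eq (hne : ∀ a, σ a ≠ [])
    (hK : ∀ a ∈ shortLetters σ, ∀ n, (substIter σ n [a]).length ≤ K)
    {c : A} (hc : c ∈ longLetters σ) (hL : ¬ LeftIsolated σ c)
    {k : ℕ} (hk : 0 < k) (hcyc : (firstLong σ)^[k] c = c) : shortPrefix σ c = [] := by
  obtain ⟨u, v, huv, hu, hlen, -⟩ := exists_substIter_eq_append_iterate_firstLong hne hK hc k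
  rw [hcyc] at huv
  by_contra hp
  refine hL ⟨k, hk, u, v, ?_, hu, huv⟩
  have := hlen hk
  have := length_pos_iff.mpr hp
  exact ne_nil_of_length_pos (by omega)

end BoundedShortLetters

theorem exists_bound_short_prefix_substIter [Fintype A] (hne : ∀ a, σ a ≠ [])
    (hL : ∀ a ∈ longLetters σ, ¬ LeftIsolated σ a) :
    ∃ P, ∀ n a u b v, substIter σ n [a] = u ++ b :: v → (∀ d ∈ u, d ∈ shortLetters σ) →
      b ∈ longLetters σ → u.length ≤ P := by
  obtain ⟨K, hK⟩ := exists_forall_length_substIter_le σ hne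
  refine ⟨∑ d, K * (shortPrefix σ d).length, fun n a u b v h hu hb => ?_⟩
  have ha : a ∈ longLetters σ := mem_longLetters_of_mem_substIter σ (by rw [h]; simp) hb
  obtain ⟨u', v', h', hu', -, hlen⟩ := exists_substIter_eq_append_iterate_firstLong hne hK ha n
  have hu_eq : u = u' := eq_of_append_cons_eq_append_cons (h.symm.trans h') hu hu'
    (not_not_intro hb) (not_not_intro (iterate_firstLong_mem_longLetters hK ha n))
  refine hu_eq ▸ hlen.trans (Finset.sum_range_iterate_le_sum_univ (firstLong σ)
    (fun d => K * (shortPrefix σ d).length) a n fun i j hij hcyc => ?_)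
  have hcyc' : (firstLong σ)^[j - i] ((firstLong σ)^[i] a) = (firstLong σ)^[i] a := by
    rw [← Function.iterate_add_apply, Nat.sub_add_cancel hij.le, hcyc]
  have hc := iterate_firstLong_mem_longLetters hK ha i
  rw [shortPrefix_eq_nil_of_iterate_firstLong_eq hne hK hc (hL _ hc) (by omega) hcyc', length_nil,
    mul_zero]

def reverseSubst (a : A) : List A := (σ a).reverse

theorem substIter_reverseSubst (n : ℕ) (w : List A) :
    substIter (reverseSubst σ) n w.reverse = (substIter σ n w).reverse := by
  induction n generalizing w with
  | zero => rfl
  | succ n ih =>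
    rw [substIter_succ, substIter_succ, ← ih, flatMap_reverse]
    simp [reverseSubst, Function.comp_def]

theorem longLetters_reverseSubst : longLetters (reverseSubst σ) = longLetters σ := by
  ext a
  refine tendsto_congr fun n => ?_
  simpa using congrArg length (substIter_reverseSubst σ n [a])

theorem shortLetters_reverseSubst : shortLetters (reverseSubst σ) = shortLetters σ := by
  rw [shortLetters, longLetters_reverseSubst, shortLetters]

theorem rightIsolated_of_leftIsolated_reverseSubst {a : A}
    (h : LeftIsolated (reverseSubst σ) a) : RightIsolated σ a := by
  obtain ⟨n, hn, u, w, hu, hus, huw⟩ := h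
  refine ⟨n, hn, u.reverse, w.reverse, by simpa using hu, ?_, ?_⟩
  · simpa [shortLetters_reverseSubst] using hus
  · simpa using congrArg reverse ((substIter_reverseSubst σ n [a]).symm.trans huw)

theorem exists_bound_short_suffix_substIter [Fintype A] (hne : ∀ a, σ a ≠ [])
    (hR : ∀ a ∈ longLetters σ, ¬ RightIsolated σ a) :
    ∃ S, ∀ n a u b v, substIter σ n [a] = u ++ b :: v → (∀ d ∈ v, d ∈ shortLetters σ) →
      b ∈ longLetters σ → v.length ≤ S := by
  obtain ⟨S, hS⟩ := exists_bound_short_prefix_substIter (reverseSubst σ)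
    (fun a => by simpa [reverseSubst] using hne a)
    (fun a ha hl => hR a (longLetters_reverseSubst σ ▸ ha)
      (rightIsolated_of_leftIsolated_reverseSubst σ hl))
  refine ⟨S, fun n a u b v h hv hb => ?_⟩
  have h' : substIter (reverseSubst σ) n [a] = v.reverse ++ b :: u.reverse := by
    simpa [h] using substIter_reverseSubst σ n [a]
  simpa using hS n a v.reverse b u.reverse h' (by simpa [shortLetters_reverseSubst] using hv)
    (longLetters_reverseSubst σ ▸ hb)

theorem length_short_prefix_substIter_le (hne : ∀ a, σ a ≠ []) {K : ℕ}
    (hK : ∀ a ∈ shortLetters σ, ∀ n, (substIter σ n [a]).length ≤ K) {P : ℕ}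
    (hP : ∀ n a u b v, substIter σ n [a] = u ++ b :: v → (∀ d ∈ u, d ∈ shortLetters σ) →
      b ∈ longLetters σ → u.length ≤ P)
    {n : ℕ} {x u v : List A} {c : A} (h : substIter σ n x = u ++ c :: v)
    (hu : ∀ d ∈ u, d ∈ shortLetters σ) (hc : c ∈ longLetters σ) :
    u.length ≤ K * x.length + P := by
  rw [substIter_eq_flatMap] at h
  obtain ⟨l₁, d, l₂, u₁, u₂, rfl, hd, rfl, -⟩ := flatMap_eq_append_cons h
  have hl₁ : ∀ e ∈ l₁, e ∈ shortLetters σ := by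
    intro e he hel
    obtain ⟨u', v', huv, -⟩ := exists_substIter_eq_append_iterate_firstLong hne hK hel n
    refine hu _ (mem_append_left _ (mem_flatMap.mpr ⟨e, he, ?_⟩))
      (iterate_firstLong_mem_longLetters hK hel n)
    rw [huv]
    simp
  have h₁ := length_substIter_le_of_forall_short hK hl₁ n
  have h₂ := hP n d u₁ c u₂ hd (fun e he => hu e (mem_append_right _ he)) hc
  rw [substIter_eq_flatMap] at h₁
  simp only [length_append, length_cons, Nat.mul_add] at h₁ ⊢
  omega

theorem exists_bound_short_gap_substIter [Fintype A] (hne : ∀ a, σ a ≠ [])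
    (hL : ∀ a ∈ longLetters σ, ¬ LeftIsolated σ a)
    (hR : ∀ a ∈ longLetters σ, ¬ RightIsolated σ a) :
    ∃ C, ∀ n a u v w b c, b ∈ longLetters σ → c ∈ longLetters σ →
      (∀ d ∈ w, d ∈ shortLetters σ) → substIter σ n [a] = u ++ b :: (w ++ c :: v) →
      w.length ≤ C := by
  obtain ⟨K, hK⟩ := exists_forall_length_substIter_le σ hne
  obtain ⟨P, hP⟩ := exists_bound_short_prefix_substIter σ hne hL
  obtain ⟨S, hS⟩ := exists_bound_short_suffix_substIter σ hne hR
  set M := Finset.univ.sup fun d => (σ d).length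
  refine ⟨S + (K * M + P), fun n => ?_⟩
  induction n with
  | zero =>
    intro a u v w b c _ _ _ h
    have := congrArg length h
    simp [substIter] at this
    omega
  | succ n ih =>
    intro a u v w b c hb hc hw h
    rw [substIter_succ_singleton, substIter_eq_flatMap] at h
    obtain ⟨l₁, d, l₂, u₁, u₂, hσa, hd, -, hrest⟩ := flatMap_eq_append_cons h
    have straddle : ∀ w', w = u₂ ++ w' →
        l₂.flatMap (fun e => substIter σ n [e]) = w' ++ c :: v → w.length ≤ S + (K * M + P) := by
      rintro w' rfl hw'
      have h₁ := hS n d u₁ b u₂ hd (fun e he => hw e (mem_append_left _ he)) hb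
      have h₂ := length_short_prefix_substIter_le σ hne hK hP
        (by rw [substIter_eq_flatMap, hw']) (fun e he => hw e (mem_append_right _ he)) hc
      have h₃ : l₂.length ≤ M := le_trans (by simp [hσa]; omega)
        (Finset.le_sup (f := fun d => (σ d).length) (Finset.mem_univ a))
      have := Nat.mul_le_mul_left K h₃
      rw [length_append]
      omega
    rcases append_eq_append_iff.mp hrest with ⟨_ | ⟨c', t⟩, hu₂, hct⟩ | ⟨w', hw', hl₂⟩
    · exact straddle [] (by simpa using hu₂.symm) (by simpa using hct.symm)
    · obtain ⟨rfl, rfl⟩ := cons_eq_cons.mp hct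
      exact ih d u₁ t w b c hb hc hw (by rw [hd, hu₂])
    · exact straddle w' hw' hl₂

end SubstMin

/-- For a tame substitution the internal `A_s`-gaps between occurrences
of letters of `A_l` in all `σⁿ(a)` (`a ∈ A_l`, `n ≥ 1`) are uniformly bounded. -/
theorem statement10 {A : Type*} [Fintype A] (σ : A → List A)
    (hσ : SubstMin.IsSubstitution σ) (htame : SubstMin.Tame σ) :
    ∃ C : ℕ, ∀ n : ℕ, 1 ≤ n → ∀ a ∈ SubstMin.longLetters σ,
      ∀ (u v w : List A) (b c : A),
        b ∈ SubstMin.longLetters σ → c ∈ SubstMin.longLetters σ →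
        (∀ d ∈ w, d ∈ SubstMin.shortLetters σ) →
        SubstMin.substIter σ n [a] = u ++ b :: (w ++ c :: v) →
        w.length ≤ C := by
  obtain ⟨C, hC⟩ := SubstMin.exists_bound_short_gap_substIter σ hσ.1
    (fun a ha => (htame a ha).1) (fun a ha => (htame a ha).2)
  exact ⟨C, fun n _ a _ => hC n a⟩
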